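/- Let R be a finite-dimensional associative real algebra with identity, equipped with an involution γ (an ℝ-linear anti-automorphism with γ∘γ = id). Let C ∈ R[t] and let M ∈ ℝ[t] be a monic real polynomial of positive degree. If the left remainder S := lrem(C, M) has vanishing norm, i.e. ν(S) = S·γ(S) = 0 (so that M is a real pseudofactor of C), then M divides the norm polynomial ν(C) = C·γ(C) in R[t]. -/

import Mathlib

open Polynomial

/-- Coefficientwise application of the involution `star` to a left polynomial. -/
noncomputable def pconj {R : Type*} [Ring R] [StarRing R] (p : Polynomial R) : Polynomial R :=
  ⟨AddMonoidAlgebra.ofCoeff (Finsupp.mapRange star (star_zero R) p.toFinsupp.coeff)⟩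

/-!
Write `F = Q M + S`. Since `M` is real, it is central in `R[t]` and fixed by `γ`, so
`F γ(F) = (Q M + S)(M γ(Q) + γ(S)) ≡ S γ(S) (mod M)`, and `S γ(S) = 0`.
-/

section pconj

variable {R : Type*} [Ring R] [StarRing R]

@[simp]
lemma pconj_coeff (p : R[X]) (n : ℕ) : (pconj p).coeff n = star (p.coeff n) := rfl

lemma pconj_add (p q : R[X]) : pconj (p + q) = pconj p + pconj q := by
  ext n
  simp [star_add]

lemma pconj_mul (p q : R[X]) : pconj (p * q) = pconj q * pconj p := by
  ext n
  rw [pconj_coeff, coeff_mul, coeff_mul, star_sum, ← Finset.Nat.sum_antidiagonal_swap]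
  refine Finset.sum_congr rfl fun x _ => ?_
  simp [star_mul]

lemma pconj_map_algebraMap {K : Type*} [CommSemiring K] [StarRing K] [TrivialStar K]
    [Algebra K R] [StarModule K R] (M : K[X]) :
    pconj (M.map (algebraMap K R)) = M.map (algebraMap K R) := by
  ext n
  rw [pconj_coeff, coeff_map, ← algebraMap_star_comm, star_trivial]

end pconj

lemma commute_map_algebraMap {K R : Type*} [CommSemiring K] [Semiring R] [Algebra K R]
    (M : K[X]) (p : R[X]) : Commute (M.map (algebraMap K R)) p := by
  ext n
  rw [coeff_mul, coeff_mul, ← Finset.Nat.sum_antidiagonal_swap]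
  refine Finset.sum_congr rfl fun x _ => ?_
  simp only [Prod.fst_swap, Prod.snd_swap, coeff_map]
  exact Algebra.commutes _ _

lemma dvd_mul_pconj_sub_of_eq_mul_add {R : Type*} [Ring R] [StarRing R] {F Q S M : R[X]}
    (hcomm : ∀ p, Commute M p) (hself : pconj M = M) (hF : F = Q * M + S) :
    M ∣ F * pconj F - S * pconj S := by
  have hexpand : F * pconj F - S * pconj S =
      (Q * M) * (M * pconj Q) + (Q * M) * pconj S + S * (M * pconj Q) := by
    rw [hF, pconj_add, pconj_mul, hself]
    noncomm_ring
  rw [hexpand, (hcomm Q).symm.eq, ← (hcomm S).left_comm]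
  simp only [mul_assoc, ← mul_add]
  exact dvd_mul_right _ _

theorem real_pseudofactor_dvd_norm_general {R : Type*} [Ring R] [Algebra ℝ R]
    [StarRing R] [StarModule ℝ R]
    (F Q S : Polynomial R) (M : Polynomial ℝ)
    (hrem : F = Q * M.map (algebraMap ℝ R) + S)
    (hnu : S * pconj S = 0) :
    M.map (algebraMap ℝ R) ∣ F * pconj F := by
  have h := dvd_mul_pconj_sub_of_eq_mul_add (commute_map_algebraMap M)
    (pconj_map_algebraMap M) hrem
  rwa [hnu, sub_zero] at h

/-- A monic real pseudofactor of `F` (the left remainder `S = lrem(F, M)` has vanishing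
norm `S · γ(S) = 0`) is a factor of the norm polynomial `ν(F) = F · γ(F)`. -/
theorem real_pseudofactor_dvd_norm {R : Type*} [Ring R] [Algebra ℝ R]
    [FiniteDimensional ℝ R] [StarRing R] [StarModule ℝ R]
    (F Q S : Polynomial R) (M : Polynomial ℝ) (hM : M.Monic) (hMdeg : 0 < M.degree)
    (hrem : F = Q * M.map (algebraMap ℝ R) + S) (hSdeg : S.degree < M.degree)
    (hnu : S * pconj S = 0) :
    M.map (algebraMap ℝ R) ∣ F * pconj F :=
  real_pseudofactor_dvd_norm_general F Q S M hrem hnu
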